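/- Let G be a graph obtained from a 2-edge-connected cubic multigraph H by replacing every vertex of H with a triangle (each of the three triangle vertices inheriting one of the three edges incident to the original vertex). If H has a 2-factor and a perfect matching whose edges are the edges not in the 2-factor, then G admits a (1,1,2,2)-packing coloring in which all vertices of G lying on edges corresponding to edges of the 2-factor of H receive colors from the two independent classes, and the vertices corresponding to vertices of H receive colors from the two 2-packing classes according to the perfect matching. -/

import Mathlib

/-!
Orient the cycles of the `2`-factor `F`: by Hall's theorem applied to the `2`-biregular
incidence between vertices and `F`-edges, every vertex `v` can pick an incident `F`-edge `σ v`
so that `σ` is a bijection onto `F`. Colour the flag `(v, e)` with `e ∈ F` by `0` if `e = σ v`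
and by `1` otherwise; at each vertex and along each `F`-edge exactly one flag gets `0`, so both
classes are independent. The two flags of a matching edge get the packing colours `2` and `3`;
flags of distinct matching edges are at distance at least `3`, because a triangle meets only one
matching edge.
-/

/-- A loopless multigraph: a set of edges `E`, each with two distinct endpoints in `V`. -/
structure Multigraph (V : Type*) (E : Type*) where
  ends : E → Sym2 V
  loopless : ∀ e : E, ¬ (ends e).IsDiag

namespace Multigraph

variable {V E : Type*}

/-- `u` and `v` are joined by a walk using only edges from `S`. -/
def Connects (M : Multigraph V E) (S : Set E) (u v : V) : Prop :=
  Relation.ReflTransGen (fun a b => ∃ e ∈ S, M.ends e = s(a, b)) u v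

/-- The multigraph is connected using only the edges in `S`. -/
def ConnectedOn (M : Multigraph V E) (S : Set E) : Prop :=
  ∀ u v : V, M.Connects S u v

/-- The multigraph is connected. -/
def Connected (M : Multigraph V E) : Prop := M.ConnectedOn Set.univ

/-- An edge is a bridge if its deletion disconnects its endpoints. -/
def IsBridge (M : Multigraph V E) (e : E) : Prop :=
  ∀ u v : V, M.ends e = s(u, v) → ¬ M.Connects {e' | e' ≠ e} u v

/-- The degree of a vertex: the number of edges incident with it. -/
noncomputable def degree (M : Multigraph V E) (v : V) : ℕ :=
  {e : E | v ∈ M.ends e}.ncard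

/-- The multigraph is cubic: every vertex has degree `3`. -/
def IsCubic (M : Multigraph V E) : Prop := ∀ v : V, M.degree v = 3

/-- A `2`-factor: a set of edges in which every vertex lies on exactly two edges,
i.e. a spanning `2`-regular subgraph. -/
def IsTwoFactor (M : Multigraph V E) (F : Set E) : Prop :=
  ∀ v : V, {e : E | e ∈ F ∧ v ∈ M.ends e}.ncard = 2

end Multigraph

/-- The flags (vertex–incident-edge pairs) of a multigraph: these are the vertices of the
graph obtained by replacing every vertex with a triangle. -/
def MGFlag {V E : Type*} (M : Multigraph V E) : Type _ :=
  {p : V × E // p.1 ∈ M.ends p.2}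

/-- The graph obtained from a cubic multigraph `M` by replacing every vertex with a
triangle: the three flags at a vertex are pairwise adjacent (the triangle), each of them
inheriting one of the three edges formerly incident to the vertex, so that the two flags
of an edge of `M` are adjacent. -/
def triangleReplacement {V E : Type*} (M : Multigraph V E) : SimpleGraph (MGFlag M) :=
  SimpleGraph.fromRel (fun p q =>
    (p.1.1 = q.1.1 ∧ p.1.2 ≠ q.1.2) ∨ (p.1.2 = q.1.2 ∧ p.1.1 ≠ q.1.1))

/-- A `(1,1,2,2)`-packing coloring: colors `0`,`1` are independent sets, colors `2`,`3`
are `2`-packings (pairwise distance greater than `2`). -/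
def IsColoring1122 {W : Type*} (G : SimpleGraph W) (f : W → Fin 4) : Prop :=
  (∀ u v : W, f u = 0 → f v = 0 → ¬ G.Adj u v) ∧
  (∀ u v : W, f u = 1 → f v = 1 → ¬ G.Adj u v) ∧
  (∀ u v : W, u ≠ v → f u = 2 → f v = 2 → 2 < G.edist u v) ∧
  (∀ u v : W, u ≠ v → f u = 3 → f v = 3 → 2 < G.edist u v)

open Finset Function

theorem Finset.exists_injective_range_eq_of_biregular {ι α : Type*} [Fintype ι] [DecidableEq α]
    (s : Finset α) (r : ι → α → Prop) [∀ i a, Decidable (r i a)] {k : ℕ} (hk : 0 < k)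
    (hι : ∀ i, #(s.bipartiteAbove r i) = k) (hα : ∀ a ∈ s, #(univ.bipartiteBelow r a) = k) :
    ∃ σ : ι → α, Injective σ ∧ Set.range σ = s ∧ ∀ i, r i (σ i) := by
  have mem {t : Finset α} {i a} : a ∈ t.bipartiteAbove r i ↔ a ∈ t ∧ r i a :=
    mem_bipartiteAbove r
  have hall : ∀ A : Finset ι, #A ≤ #(A.biUnion fun i => s.bipartiteAbove r i) := by
    intro A
    refine Nat.le_of_mul_le_mul_right (card_mul_le_card_mul r (m := k) (n := k) ?_ ?_) hk
    · intro i hi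
      rw [← hι i]
      exact card_le_card fun a ha => mem.mpr ⟨mem_biUnion.mpr ⟨i, hi, ha⟩, (mem.mp ha).2⟩
    · intro a ha
      obtain ⟨i, -, hai⟩ := mem_biUnion.mp ha
      rw [← hα a (mem.mp hai).1]
      exact card_le_card (filter_subset_filter _ (subset_univ A))
  obtain ⟨σ, hσ, hσs⟩ := (all_card_le_biUnion_card_iff_existsInjective' _).mp hall
  have hcard : #(univ : Finset ι) = #s :=
    Nat.eq_of_mul_eq_mul_right hk (card_mul_eq_card_mul r (fun i _ => hι i) hα)
  refine ⟨σ, hσ, ?_, fun i => (mem.mp (hσs i)).2⟩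
  refine Set.Subset.antisymm (Set.range_subset_iff.mpr fun i => (mem.mp (hσs i)).1) fun a ha => ?_
  obtain ⟨i, -, rfl⟩ := surj_on_of_inj_on_of_card_le (fun i (_ : i ∈ univ) => σ i)
    (fun i _ => (mem.mp (hσs i)).1) (fun i j _ _ h => hσ h) hcard.ge a ha
  exact ⟨i, rfl⟩

namespace Multigraph

variable {V E : Type*} {M : Multigraph V E}

def IsMatching (M : Multigraph V E) (S : Set E) : Prop :=
  ∀ ⦃v : V⦄ ⦃e₁ e₂ : E⦄, e₁ ∈ S → e₂ ∈ S → v ∈ M.ends e₁ → v ∈ M.ends e₂ → e₁ = e₂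

theorem isMatching_of_forall_ncard_eq_one {S : Set E}
    (h : ∀ v, {e | e ∈ S ∧ v ∈ M.ends e}.ncard = 1) : M.IsMatching S := by
  intro v e₁ e₂ h₁ h₂ hv₁ hv₂
  obtain ⟨e, he⟩ := Set.ncard_eq_one.mp (h v)
  have m₁ : e₁ ∈ {e | e ∈ S ∧ v ∈ M.ends e} := ⟨h₁, hv₁⟩
  have m₂ : e₂ ∈ {e | e ∈ S ∧ v ∈ M.ends e} := ⟨h₂, hv₂⟩
  rw [he] at m₁ m₂
  exact m₁.trans m₂.symm

theorem eq_or_eq_of_mem_ends {e : E} {u v w : V} (hu : u ∈ M.ends e) (hv : v ∈ M.ends e)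
    (huv : u ≠ v) (hw : w ∈ M.ends e) : w = u ∨ w = v := by
  rwa [(Sym2.mem_and_mem_iff huv).mp ⟨hu, hv⟩, Sym2.mem_iff] at hw

theorem IsTwoFactor.eq_or_eq_of_mem {F : Set E} (hF : M.IsTwoFactor F) {v : V} {e e₁ e₂ : E}
    (he : e ∈ F) (hv : v ∈ M.ends e) (he₁ : e₁ ∈ F) (hv₁ : v ∈ M.ends e₁) (he₂ : e₂ ∈ F)
    (hv₂ : v ∈ M.ends e₂) (h₁₂ : e₁ ≠ e₂) : e = e₁ ∨ e = e₂ := by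
  obtain ⟨x, y, -, hxy⟩ := Set.ncard_eq_two.mp (hF v)
  have mem : ∀ e', e' ∈ F → v ∈ M.ends e' → e' = x ∨ e' = y := fun e' he' hv' => by
    have : e' ∈ {e | e ∈ F ∧ v ∈ M.ends e} := ⟨he', hv'⟩
    simpa [hxy] using this
  grind

theorem IsTwoFactor.exists_orientation [Fintype V] [Finite E] {F : Set E}
    (hF : M.IsTwoFactor F) :
    ∃ σ : V → E, Injective σ ∧ Set.range σ = F ∧ ∀ v, v ∈ M.ends (σ v) := by
  classical
  obtain ⟨σ, hσ, hrange, hends⟩ := F.toFinite.toFinset.exists_injective_range_eq_of_biregular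
    (fun v e => v ∈ M.ends e) two_pos
    (fun v => by
      rw [← hF v, ← Set.ncard_coe_finset]
      congr 1
      ext e
      simp)
    (fun e _ => by
      rw [← Sym2.card_toFinset_of_not_isDiag _ (M.loopless e)]
      congr 1
      ext v
      simp)
  exact ⟨σ, hσ, by simpa using hrange, hends⟩

end Multigraph

namespace MGFlag

variable {V E : Type*} {M : Multigraph V E}

theorem ext {p q : MGFlag M} (h₁ : p.1.1 = q.1.1) (h₂ : p.1.2 = q.1.2) : p = q :=
  Subtype.ext (Prod.ext h₁ h₂)

theorem eq_fst_or_eq_fst_of_snd_eq {p q : MGFlag M} (hpq : p ≠ q) (h : p.1.2 = q.1.2) {w : V}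
    (hw : w ∈ M.ends p.1.2) : w = p.1.1 ∨ w = q.1.1 :=
  Multigraph.eq_or_eq_of_mem_ends p.2 (h ▸ q.2) (fun h' => hpq (ext h' h)) hw

end MGFlag

section TriangleReplacement

variable {V E : Type*} {M : Multigraph V E}

theorem triangleReplacement_adj {p q : MGFlag M} :
    (triangleReplacement M).Adj p q ↔ p ≠ q ∧ (p.1.1 = q.1.1 ∨ p.1.2 = q.1.2) := by
  have : p ≠ q ↔ p.1 ≠ q.1 := Subtype.ext_iff.not
  simp only [triangleReplacement, SimpleGraph.fromRel_adj, this]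
  grind

theorem two_lt_edist_triangleReplacement {S : Set E} (hS : M.IsMatching S) {p q : MGFlag M}
    (hp : p.1.2 ∈ S) (hq : q.1.2 ∈ S) (hpq : p.1.2 ≠ q.1.2) :
    2 < (triangleReplacement M).edist p q := by
  have touch : ∀ {r s : MGFlag M}, (triangleReplacement M).Adj r s →
      r.1.1 = s.1.1 ∨ r.1.2 = s.1.2 := fun h => (triangleReplacement_adj.mp h).2
  have disjoint : ∀ v, v ∈ M.ends p.1.2 → v ∉ M.ends q.1.2 := fun v hv hv' => hpq (hS hp hq hv hv')
  rw [SimpleGraph.two_lt_edist_iff]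
  refine ⟨fun h => hpq (h ▸ rfl), fun h => ?_, ?_⟩
  · rcases touch h with h | h
    · exact disjoint _ p.2 (h ▸ q.2)
    · exact hpq h
  · ext r
    simp only [SimpleGraph.mem_commonNeighbors, Set.mem_empty_iff_false, iff_false, not_and]
    intro hpr hqr
    have hr := r.2
    rcases touch hpr with h₁ | h₁ <;> rcases touch hqr with h₂ | h₂
    · exact disjoint _ p.2 (h₁ ▸ h₂ ▸ q.2)
    · exact disjoint _ p.2 (h₁ ▸ h₂ ▸ hr)
    · exact disjoint _ (h₁ ▸ h₂ ▸ hr) q.2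
    · exact hpq (h₁.trans h₂.symm)

end TriangleReplacement

section Coloring

variable {V E : Type*} {M : Multigraph V E} {F : Set E} {σ : V → E}

open Classical in
noncomputable def twoFactorColoring (M : Multigraph V E) (F : Set E) (σ : V → E) :
    MGFlag M → Fin 4 := fun p =>
  if p.1.2 ∈ F then (if σ p.1.1 = p.1.2 then 0 else 1)
  else (if p.1.1 = (M.ends p.1.2).out.1 then 2 else 3)

theorem twoFactorColoring_eq_zero_iff {p : MGFlag M} :
    twoFactorColoring M F σ p = 0 ↔ p.1.2 ∈ F ∧ σ p.1.1 = p.1.2 := by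
  unfold twoFactorColoring; split_ifs <;> simp_all

theorem twoFactorColoring_eq_one_iff {p : MGFlag M} :
    twoFactorColoring M F σ p = 1 ↔ p.1.2 ∈ F ∧ σ p.1.1 ≠ p.1.2 := by
  unfold twoFactorColoring; split_ifs <;> simp_all

theorem twoFactorColoring_eq_two_iff {p : MGFlag M} :
    twoFactorColoring M F σ p = 2 ↔ p.1.2 ∉ F ∧ p.1.1 = (M.ends p.1.2).out.1 := by
  unfold twoFactorColoring; split_ifs <;> simp_all

theorem twoFactorColoring_eq_three_iff {p : MGFlag M} :
    twoFactorColoring M F σ p = 3 ↔ p.1.2 ∉ F ∧ p.1.1 ≠ (M.ends p.1.2).out.1 := by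
  unfold twoFactorColoring; split_ifs <;> simp_all

theorem twoFactorColoring_of_mem {p : MGFlag M} (hp : p.1.2 ∈ F) :
    twoFactorColoring M F σ p = 0 ∨ twoFactorColoring M F σ p = 1 := by
  rw [twoFactorColoring_eq_zero_iff, twoFactorColoring_eq_one_iff]
  tauto

theorem twoFactorColoring_of_notMem {p : MGFlag M} (hp : p.1.2 ∉ F) :
    twoFactorColoring M F σ p = 2 ∨ twoFactorColoring M F σ p = 3 := by
  rw [twoFactorColoring_eq_two_iff, twoFactorColoring_eq_three_iff]
  tauto

theorem twoFactorColoring_eq_three_of_ne_of_snd_eq {p q : MGFlag M} (hpq : p ≠ q)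
    (h : p.1.2 = q.1.2) (hp : twoFactorColoring M F σ p = 2) :
    twoFactorColoring M F σ q = 3 := by
  rw [twoFactorColoring_eq_two_iff] at hp
  rw [twoFactorColoring_eq_three_iff, ← h]
  exact ⟨hp.1, fun hq => hpq (MGFlag.ext (hp.2.trans hq.symm) h)⟩

theorem twoFactorColoring_ne_of_snd_eq {p q : MGFlag M} (hpq : p ≠ q) (h : p.1.2 = q.1.2)
    (hp : p.1.2 ∉ F) : twoFactorColoring M F σ p ≠ twoFactorColoring M F σ q := by
  rcases MGFlag.eq_fst_or_eq_fst_of_snd_eq hpq h (Sym2.out_fst_mem _) with hp' | hq'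
  · have h₂ : twoFactorColoring M F σ p = 2 := twoFactorColoring_eq_two_iff.mpr ⟨hp, hp'.symm⟩
    rw [h₂, twoFactorColoring_eq_three_of_ne_of_snd_eq hpq h h₂]
    decide
  · have h₂ : twoFactorColoring M F σ q = 2 :=
      twoFactorColoring_eq_two_iff.mpr ⟨h ▸ hp, h ▸ hq'.symm⟩
    rw [h₂, twoFactorColoring_eq_three_of_ne_of_snd_eq hpq.symm h.symm h₂]
    decide

theorem twoFactorColoring_zero_not_adj (hσ : Injective σ) {u v : MGFlag M}
    (hu : twoFactorColoring M F σ u = 0) (hv : twoFactorColoring M F σ v = 0) :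
    ¬ (triangleReplacement M).Adj u v := by
  rw [twoFactorColoring_eq_zero_iff] at hu hv
  rw [triangleReplacement_adj]
  rintro ⟨huv, h | h⟩
  · exact huv (MGFlag.ext h (by rw [← hu.2, ← hv.2, h]))
  · exact huv (MGFlag.ext (hσ (by rw [hu.2, hv.2, h])) h)

theorem twoFactorColoring_one_not_adj (hF : M.IsTwoFactor F) (hrange : Set.range σ = F)
    (hends : ∀ v, v ∈ M.ends (σ v)) {u v : MGFlag M}
    (hu : twoFactorColoring M F σ u = 1) (hv : twoFactorColoring M F σ v = 1) :
    ¬ (triangleReplacement M).Adj u v := by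
  rw [twoFactorColoring_eq_one_iff] at hu hv
  rw [triangleReplacement_adj]
  rintro ⟨huv, h | h⟩
  · have hσF : σ u.1.1 ∈ F := hrange ▸ Set.mem_range_self _
    rcases hF.eq_or_eq_of_mem hσF (hends _) hu.1 u.2 hv.1 (h ▸ v.2)
      (fun h' => huv (MGFlag.ext h h')) with h' | h'
    · exact hu.2 h'
    · exact hv.2 (h ▸ h')
  · obtain ⟨w, hw⟩ : u.1.2 ∈ Set.range σ := hrange ▸ hu.1
    rcases MGFlag.eq_fst_or_eq_fst_of_snd_eq huv h (hw ▸ hends w) with rfl | rfl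
    · exact hu.2 hw
    · exact hv.2 (hw.trans h)

theorem two_lt_edist_of_twoFactorColoring_eq_two (hS : M.IsMatching Fᶜ) {u v : MGFlag M}
    (huv : u ≠ v) (hu : twoFactorColoring M F σ u = 2) (hv : twoFactorColoring M F σ v = 2) :
    2 < (triangleReplacement M).edist u v := by
  rw [twoFactorColoring_eq_two_iff] at hu hv
  refine two_lt_edist_triangleReplacement hS hu.1 hv.1 fun h => huv (MGFlag.ext ?_ h)
  rw [hu.2, hv.2, h]

theorem two_lt_edist_of_twoFactorColoring_eq_three (hS : M.IsMatching Fᶜ) {u v : MGFlag M}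
    (huv : u ≠ v) (hu : twoFactorColoring M F σ u = 3) (hv : twoFactorColoring M F σ v = 3) :
    2 < (triangleReplacement M).edist u v := by
  refine two_lt_edist_triangleReplacement hS ?_ ?_ fun h => ?_
  · exact (twoFactorColoring_eq_three_iff.mp hu).1
  · exact (twoFactorColoring_eq_three_iff.mp hv).1
  · exact twoFactorColoring_ne_of_snd_eq huv h (twoFactorColoring_eq_three_iff.mp hu).1
      (hu.trans hv.symm)

theorem isColoring1122_twoFactorColoring (hF : M.IsTwoFactor F) (hS : M.IsMatching Fᶜ)
    (hσ : Injective σ) (hrange : Set.range σ = F) (hends : ∀ v, v ∈ M.ends (σ v)) :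
    IsColoring1122 (triangleReplacement M) (twoFactorColoring M F σ) :=
  ⟨fun _ _ => twoFactorColoring_zero_not_adj hσ,
    fun _ _ => twoFactorColoring_one_not_adj hF hrange hends,
    fun _ _ => two_lt_edist_of_twoFactorColoring_eq_two hS,
    fun _ _ => two_lt_edist_of_twoFactorColoring_eq_three hS⟩

end Coloring

theorem triangleReplacement_is_1122_colorable_general {V E : Type*} [Fintype V] [Fintype E]
    (M : Multigraph V E) (F : Set E) (hF : M.IsTwoFactor F)
    (hmatching : ∀ v : V, {e : E | e ∉ F ∧ v ∈ M.ends e}.ncard = 1) :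
    ∃ f : MGFlag M → Fin 4, IsColoring1122 (triangleReplacement M) f ∧
      (∀ p : MGFlag M, p.1.2 ∈ F → (f p = 0 ∨ f p = 1)) ∧
      (∀ p : MGFlag M, p.1.2 ∉ F → (f p = 2 ∨ f p = 3)) ∧
      (∀ p q : MGFlag M, p ≠ q → p.1.2 = q.1.2 → p.1.2 ∉ F → f p ≠ f q) := by
  obtain ⟨σ, hσ, hrange, hends⟩ := hF.exists_orientation
  have hS : M.IsMatching Fᶜ := Multigraph.isMatching_of_forall_ncard_eq_one hmatching
  exact ⟨twoFactorColoring M F σ, isColoring1122_twoFactorColoring hF hS hσ hrange hends,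
    fun _ => twoFactorColoring_of_mem, fun _ => twoFactorColoring_of_notMem,
    fun _ _ => twoFactorColoring_ne_of_snd_eq⟩

/-- Let `G` be obtained from a `2`-edge-connected cubic multigraph `H` by replacing every
vertex with a triangle. If `H` has a `2`-factor whose complementary edges form a perfect
matching, then `G` has a `(1,1,2,2)`-packing coloring in which the vertices lying on edges
of the `2`-factor get colors from the two independent classes, and the vertices lying on
matching edges get colors from the two `2`-packing classes, the two endpoints of each
matching edge receiving the two distinct packing colors. -/
theorem triangleReplacement_is_1122_colorable {V E : Type*} [Fintype V] [Fintype E]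
    (M : Multigraph V E) (hconn : M.Connected) (hbridgeless : ∀ e : E, ¬ M.IsBridge e)
    (hcubic : M.IsCubic) (F : Set E) (hF : M.IsTwoFactor F)
    (hmatching : ∀ v : V, {e : E | e ∉ F ∧ v ∈ M.ends e}.ncard = 1) :
    ∃ f : MGFlag M → Fin 4, IsColoring1122 (triangleReplacement M) f ∧
      (∀ p : MGFlag M, p.1.2 ∈ F → (f p = 0 ∨ f p = 1)) ∧
      (∀ p : MGFlag M, p.1.2 ∉ F → (f p = 2 ∨ f p = 3)) ∧
      (∀ p q : MGFlag M, p ≠ q → p.1.2 = q.1.2 → p.1.2 ∉ F → f p ≠ f q) :=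
  triangleReplacement_is_1122_colorable_general M F hF hmatching
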